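/- If S ⊆ E is a subset of one side of the bipartition of Q_d with |S| ≤ d/10, then |N(S)| ≥ d|S| − 2|S|². -/

import Mathlib

open Finset

/-- The hypercube graph `Q_d` on `{0,1}^d`: vertices adjacent iff they differ in
exactly one coordinate. -/
def cubeGraph (d : ℕ) : SimpleGraph (Fin d → Bool) where
  Adj x y := hammingDist x y = 1
  symm := ⟨fun x y h => (hammingDist_comm y x).trans h⟩
  loopless := ⟨fun x h => by simp [hammingDist_self] at h⟩

/-- The distance-2 graph on `{0,1}^d`: vertices adjacent iff Hamming distance 2. -/
def distTwoGraph (d : ℕ) : SimpleGraph (Fin d → Bool) where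
  Adj x y := hammingDist x y = 2
  symm := ⟨fun x y h => (hammingDist_comm y x).trans h⟩
  loopless := ⟨fun x h => by simp [hammingDist_self] at h⟩

/-- The even side `E` of the bipartition of `Q_d`. -/
def evenFinset (d : ℕ) : Finset (Fin d → Bool) :=
  Finset.univ.filter fun x => Even (∑ i, if x i then 1 else 0 : ℕ)

/-- The odd side `O` of the bipartition of `Q_d`. -/
def oddFinset (d : ℕ) : Finset (Fin d → Bool) :=
  Finset.univ.filter fun x => ¬ Even (∑ i, if x i then 1 else 0 : ℕ)

/-- The neighbourhood `N(A)` of a set of vertices in `Q_d`. -/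
def nbhd (d : ℕ) (A : Finset (Fin d → Bool)) : Finset (Fin d → Bool) :=
  A.biUnion fun x => Finset.univ.filter fun y => hammingDist x y = 1

/-- `S` is 2-linked: connected in the square of `Q_d` (for `S` inside one side of the
bipartition this is connectivity in the distance-2 graph). -/
def TwoLinked (d : ℕ) (S : Finset (Fin d → Bool)) : Prop :=
  ((distTwoGraph d).induce (S : Set (Fin d → Bool))).Connected


lemma dist_one_exists {d : ℕ} {x y : Fin d → Bool} (h : hammingDist x y = 1) :
    ∃ i, x i ≠ y i ∧ y = Function.update x i (!(x i)) := by
  have h' : (Finset.univ.filter fun k => x k ≠ y k).card = 1 := h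
  obtain ⟨i, hi⟩ := Finset.card_eq_one.1 h'
  have hiff : ∀ j, x j ≠ y j ↔ j = i := by
    intro j
    constructor
    · intro hj
      have hm : j ∈ (Finset.univ.filter fun k => x k ≠ y k) := by
        simp only [mem_filter, mem_univ, true_and]; exact hj
      rw [hi] at hm; simpa using hm
    · rintro rfl
      have hm : j ∈ ({j} : Finset (Fin d)) := by simp
      rw [← hi] at hm
      simp only [mem_filter, mem_univ, true_and] at hm; exact hm
  refine ⟨i, (hiff i).2 rfl, funext fun j => ?_⟩
  rcases eq_or_ne j i with rfl | hj
  · rw [Function.update_self]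
    have := (hiff j).2 rfl
    cases hxj : x j <;> cases hyj : y j <;> simp_all
  · rw [Function.update_of_ne hj]
    by_contra hc
    exact hj ((hiff j).1 fun e => hc e.symm)

lemma flip_dist {d : ℕ} (x : Fin d → Bool) (i : Fin d) :
    hammingDist x (Function.update x i (!(x i))) = 1 := by
  have h : (Finset.univ.filter fun j => x j ≠ Function.update x i (!(x i)) j) = {i} := by
    ext j
    simp only [mem_filter, mem_univ, true_and, mem_singleton]
    constructor
    · intro hj
      by_contra hne
      rw [Function.update_of_ne (fun e => hne e)] at hj
      exact hj rfl
    · rintro rfl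
      rw [Function.update_self]
      cases x j <;> simp
  show (Finset.univ.filter fun j => x j ≠ Function.update x i (!(x i)) j).card = 1
  rw [h]; simp

/-- The sphere of radius 1 has exactly `d` points. -/
lemma sphere_card (d : ℕ) (x : Fin d → Bool) :
    (Finset.univ.filter fun y => hammingDist x y = 1).card = d := by
  have h : (Finset.univ.filter fun y => hammingDist x y = 1)
      = Finset.univ.image fun i : Fin d => Function.update x i (!(x i)) := by
    ext y
    simp only [mem_filter, mem_univ, true_and, mem_image]
    constructor
    · intro hy
      obtain ⟨i, _, hyi⟩ := dist_one_exists hy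
      exact ⟨i, hyi.symm⟩
    · rintro ⟨i, rfl⟩
      exact flip_dist x i
  rw [h, Finset.card_image_of_injective _ ?_, Finset.card_univ, Fintype.card_fin]
  intro i j hij
  by_contra hne
  have h2 : Function.update x i (!(x i)) i = Function.update x j (!(x j)) i := congrFun hij i
  rw [Function.update_self, Function.update_of_ne hne] at h2
  cases x i <;> simp_all

/-- Two distinct points have at most 2 common neighbours. -/
lemma common_nbrs_le_two {d : ℕ} {x x' : Fin d → Bool} (hne : x ≠ x') :
    (Finset.univ.filter fun y => hammingDist x y = 1 ∧ hammingDist x' y = 1).card ≤ 2 := by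
  set C := Finset.univ.filter fun y => hammingDist x y = 1 ∧ hammingDist x' y = 1 with hC
  rcases C.eq_empty_or_nonempty with he | ⟨y₀, hy₀⟩
  · simp [he]
  · have hy₀' : hammingDist x y₀ = 1 ∧ hammingDist x' y₀ = 1 := by
      simpa [hC] using hy₀
    have hDcard : hammingDist x x' ≤ 2 := by
      calc hammingDist x x' ≤ hammingDist x y₀ + hammingDist y₀ x' := hammingDist_triangle _ _ _
        _ = 2 := by rw [hammingDist_comm y₀ x', hy₀'.1, hy₀'.2]
    set D := Finset.univ.filter fun i => x i ≠ x' i with hD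
    have hsub : C ⊆ D.image fun i => Function.update x i (!(x i)) := by
      intro y hy
      have hy' : hammingDist x y = 1 ∧ hammingDist x' y = 1 := by simpa [hC] using hy
      obtain ⟨i, hxi, hyi⟩ := dist_one_exists hy'.1
      have hiD : i ∈ D := by
        simp only [hD, mem_filter, mem_univ, true_and]
        intro heq
        apply hne
        funext j
        rcases eq_or_ne j i with rfl | hji
        · exact heq
        · by_contra hj
          -- both i and j lie in the difference set of x' and y, contradicting dist x' y = 1
          have hyi' : y i ≠ x' i := by rw [← heq]; exact fun e => hxi e.symm
          have hyj : y j = x j := by rw [hyi, Function.update_of_ne hji]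
          have hsub2 : ({i, j} : Finset (Fin d)) ⊆
              Finset.univ.filter fun k => x' k ≠ y k := by
            intro k hk
            simp only [mem_insert, mem_singleton] at hk
            simp only [mem_filter, mem_univ, true_and]
            rcases hk with rfl | rfl
            · exact fun e => hyi' e.symm
            · rw [hyj]; exact fun e => hj e.symm
          have h2 : 2 ≤ (Finset.univ.filter fun k => x' k ≠ y k).card := by
            calc 2 = ({i, j} : Finset (Fin d)).card := (Finset.card_pair (fun e => hji e.symm)).symm
              _ ≤ _ := Finset.card_le_card hsub2
          have : (Finset.univ.filter fun k => x' k ≠ y k).card = 1 := hy'.2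
          omega
      exact Finset.mem_image.2 ⟨i, hiD, hyi.symm⟩
    calc C.card ≤ (D.image fun i => Function.update x i (!(x i))).card := Finset.card_le_card hsub
      _ ≤ D.card := Finset.card_image_le
      _ ≤ 2 := hDcard

/-- Isoperimetry in `Q_d`: if `S ⊆ E` and `|S| ≤ d/10` then `|N(S)| ≥ d|S| − 2|S|²`. -/
theorem iso_small_sets (d : ℕ) (S : Finset (Fin d → Bool)) (hS : S ⊆ evenFinset d)
    (hsize : 10 * S.card ≤ d) :
    (d : ℤ) * S.card - 2 * (S.card : ℤ) ^ 2 ≤ ((nbhd d S).card : ℤ) := by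
  classical
  set N := nbhd d S with hN
  set T : (Fin d → Bool) → ℕ := fun y => (S.filter fun x => hammingDist x y = 1).card with hT
  have hmemN : ∀ x ∈ S, ∀ y, hammingDist x y = 1 → y ∈ N := by
    intro x hx y hy
    exact Finset.mem_biUnion.2 ⟨x, hx, by simp [hy]⟩
  have hsum : ∑ y ∈ N, T y = d * S.card := by
    have h1 : ∑ y ∈ N, T y = ∑ y ∈ N, ∑ x ∈ S, if hammingDist x y = 1 then 1 else 0 := by
      refine Finset.sum_congr rfl fun y _ => ?_
      exact Finset.card_filter _ _
    rw [h1, Finset.sum_comm]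
    have h2 : ∀ x ∈ S, (∑ y ∈ N, if hammingDist x y = 1 then 1 else 0) = d := by
      intro x hx
      rw [← Finset.card_filter]
      have he : N.filter (fun y => hammingDist x y = 1)
          = Finset.univ.filter fun y => hammingDist x y = 1 := by
        ext y
        simp only [mem_filter, mem_univ, true_and, and_iff_right_iff_imp]
        exact hmemN x hx y
      rw [he, sphere_card]
    rw [Finset.sum_congr rfl h2, Finset.sum_const, smul_eq_mul, mul_comm]
  have hlow : ∀ y ∈ N, 1 ≤ T y := by
    intro y hy
    obtain ⟨x, hx, hxy⟩ := Finset.mem_biUnion.1 hy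
    simp only [mem_filter, mem_univ, true_and] at hxy
    exact Finset.card_pos.2 ⟨x, Finset.mem_filter.2 ⟨hx, hxy⟩⟩
  have hpair : ∑ y ∈ N, (T y - 1) ≤ 2 * (S.card * S.card) := by
    have step1 : ∀ y, T y - 1 ≤
        ∑ p ∈ S.offDiag, (if hammingDist p.1 y = 1 ∧ hammingDist p.2 y = 1 then 1 else 0) := by
      intro y
      rw [← Finset.card_filter]
      have heq : S.offDiag.filter (fun p => hammingDist p.1 y = 1 ∧ hammingDist p.2 y = 1)
          = (S.filter fun x => hammingDist x y = 1).offDiag := by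
        ext p
        simp only [mem_filter, Finset.mem_offDiag]
        tauto
      rw [heq, Finset.offDiag_card]
      have key : ∀ k : ℕ, k - 1 ≤ k * k - k := by
        intro k
        cases k with
        | zero => simp
        | succ n =>
          have h : (n + 1) * (n + 1) = (n + 1) * n + (n + 1) := by ring
          rw [h]
          have h2 : n ≤ (n + 1) * n := Nat.le_mul_of_pos_left n (Nat.succ_pos n)
          omega
      exact key (T y)
    calc ∑ y ∈ N, (T y - 1)
        ≤ ∑ y ∈ N, ∑ p ∈ S.offDiag,
            (if hammingDist p.1 y = 1 ∧ hammingDist p.2 y = 1 then 1 else 0) :=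
          Finset.sum_le_sum fun y _ => step1 y
      _ = ∑ p ∈ S.offDiag, ∑ y ∈ N,
            (if hammingDist p.1 y = 1 ∧ hammingDist p.2 y = 1 then 1 else 0) :=
          Finset.sum_comm
      _ ≤ ∑ _p ∈ S.offDiag, 2 := by
          refine Finset.sum_le_sum fun p hp => ?_
          rw [← Finset.card_filter]
          have hne : p.1 ≠ p.2 := (Finset.mem_offDiag.1 hp).2.2
          calc (N.filter fun y => hammingDist p.1 y = 1 ∧ hammingDist p.2 y = 1).card
              ≤ (Finset.univ.filter fun y =>
                  hammingDist p.1 y = 1 ∧ hammingDist p.2 y = 1).card :=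
                Finset.card_le_card (Finset.filter_subset_filter _ (Finset.subset_univ N))
            _ ≤ 2 := common_nbrs_le_two hne
      _ = 2 * S.offDiag.card := by rw [Finset.sum_const, smul_eq_mul, mul_comm]
      _ ≤ 2 * (S.card * S.card) := by
          rw [Finset.offDiag_card]
          exact Nat.mul_le_mul_left 2 (Nat.sub_le _ _)
  have hmain : d * S.card ≤ N.card + 2 * (S.card * S.card) := by
    have hsplit : ∑ y ∈ N, T y = (∑ y ∈ N, (T y - 1)) + N.card := by
      rw [Finset.card_eq_sum_ones N]
      rw [← Finset.sum_add_distrib]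
      refine Finset.sum_congr rfl fun y hy => ?_
      have := hlow y hy
      omega
    omega
  have hcast : (d : ℤ) * S.card ≤ (N.card : ℤ) + 2 * (S.card : ℤ) ^ 2 := by
    have := hmain
    push_cast
    nlinarith [this]
  linarith
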